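/- Any winning set for Schmidt's game in R^d has Hausdorff dimension d. -/

import Mathlib

open Metric

/-- Alice has a winning strategy in Schmidt's `(α, β)`-game with target set `S` on a metric
space `X`.  Bob starts with a closed ball of radius `ρ` centred at `x₀`; thereafter Bob's `n`-th
ball has radius `ρ(αβ)ⁿ` and Alice's `n`-th ball has radius `ρα(αβ)ⁿ⁻¹`.  A strategy for Alice
assigns to every (relevant) finite history of Bob's moves her next centre; it must always
produce a ball contained in Bob's previous ball, and whenever Bob plays legally forever, every
point of the resulting nested intersection belongs to `S`. -/
def IsAlphaBetaWinning {X : Type*} [MetricSpace X] (α β : ℝ) (S : Set X) : Prop :=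
  ∀ ρ : ℝ, 0 < ρ → ∀ x₀ : X,
    ∃ a : (ℕ → X) → ℕ → X,
      (∀ bob bob' : ℕ → X, ∀ n : ℕ, (∀ i ≤ n, bob i = bob' i) → a bob n = a bob' n) ∧
      ∀ bob : ℕ → X, bob 0 = x₀ →
        (∀ n : ℕ, closedBall (bob (n + 1)) (ρ * (α * β) ^ (n + 1)) ⊆
            closedBall (a bob n) (ρ * α * (α * β) ^ n)) →
        (∀ n : ℕ, closedBall (a bob n) (ρ * α * (α * β) ^ n) ⊆
            closedBall (bob n) (ρ * (α * β) ^ n)) ∧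
          ∀ z : X, (∀ n : ℕ, z ∈ closedBall (bob n) (ρ * (α * β) ^ n)) → z ∈ S

/-- `S` is `α`-winning for Schmidt's game: Alice wins the `(α, β)`-game for every `β ∈ (0,1)`. -/
def IsAlphaWinning {X : Type*} [MetricSpace X] (α : ℝ) (S : Set X) : Prop :=
  0 < α ∧ α < 1 ∧ ∀ β : ℝ, 0 < β → β < 1 → IsAlphaBetaWinning α β S

/-! The upper bound is `S ⊆ ℝ^d`. For the lower bound fix Alice's winning strategy for
`β = 1 / (3K)`. Inside each of Alice's balls Bob may pick any of `K^d` grid points, spaced three of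
his radii apart, so the plays against the strategy are indexed by codes `ω : ℕ → Fin d → Fin K`
and their outcomes form a Cantor set in `S`: outcomes of codes first differing before step `n` are
`(αβ)^n` apart. Reading an outcome's code as base-`K` digits maps this Cantor set onto a cube,
and the map is `r`-Hölder as soon as `K⁻¹ ≤ (αβ)^r`; hence `dimH S ≥ d r`. Letting `K → ∞` lets
`r → 1`. -/

open Set Filter Function
open scoped NNReal ENNReal

section Game

variable {X : Type*}

def IsCausal (a : (ℕ → X) → ℕ → X) : Prop :=
  ∀ bob bob' : ℕ → X, ∀ n : ℕ, (∀ i ≤ n, bob i = bob' i) → a bob n = a bob' n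

def IsWinningStrategy [MetricSpace X] (α β ρ : ℝ) (x₀ : X) (S : Set X)
    (a : (ℕ → X) → ℕ → X) : Prop :=
  ∀ bob : ℕ → X, bob 0 = x₀ →
    (∀ n : ℕ, closedBall (bob (n + 1)) (ρ * (α * β) ^ (n + 1)) ⊆
        closedBall (a bob n) (ρ * α * (α * β) ^ n)) →
    (∀ n : ℕ, closedBall (a bob n) (ρ * α * (α * β) ^ n) ⊆
        closedBall (bob n) (ρ * (α * β) ^ n)) ∧
      ∀ z : X, (∀ n : ℕ, z ∈ closedBall (bob n) (ρ * (α * β) ^ n)) → z ∈ S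

/-- Bob answers Alice's `n`-th centre `c` with `reply n c`. Move `n + 1` may only consult the
history up to move `n`; against a causal strategy that is no restriction (`bobPlay_succ`). -/
def bobPlay (a : (ℕ → X) → ℕ → X) (x₀ : X) (reply : ℕ → X → X) : ℕ → X
  | 0 => x₀
  | n + 1 => reply n (a (fun k => bobPlay a x₀ reply (min k n)) n)
  decreasing_by exact Nat.lt_succ_of_le (min_le_right _ _)

variable {a : (ℕ → X) → ℕ → X} {x₀ : X} {reply : ℕ → X → X}

theorem bobPlay_zero : bobPlay a x₀ reply 0 = x₀ := by
  rw [bobPlay]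

theorem bobPlay_succ (ha : IsCausal a) (n : ℕ) :
    bobPlay a x₀ reply (n + 1) = reply n (a (bobPlay a x₀ reply) n) := by
  rw [bobPlay]
  congr 1
  exact ha _ _ n fun i hi => by rw [min_eq_left hi]

theorem bobPlay_congr (ha : IsCausal a) {reply' : ℕ → X → X} {n : ℕ}
    (h : ∀ i < n, reply i = reply' i) : bobPlay a x₀ reply n = bobPlay a x₀ reply' n := by
  induction n using Nat.strong_induction_on with
  | _ n ih =>
    cases n with
    | zero => rw [bobPlay_zero, bobPlay_zero]
    | succ n =>
      rw [bobPlay_succ ha, bobPlay_succ ha, h n n.lt_succ_self,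
        ha _ _ n fun i hi => ih i (by omega) fun j hj => h j (by omega)]

variable [MetricSpace X] {α β ρ : ℝ} {S : Set X}

def IsLegalReply (α β ρ : ℝ) (reply : ℕ → X → X) : Prop :=
  ∀ n c, closedBall (reply n c) (ρ * (α * β) ^ (n + 1)) ⊆ closedBall c (ρ * α * (α * β) ^ n)

theorem IsLegalReply.closedBall_bobPlay_succ_subset (hreply : IsLegalReply α β ρ reply)
    (ha : IsCausal a) (n : ℕ) :
    closedBall (bobPlay a x₀ reply (n + 1)) (ρ * (α * β) ^ (n + 1)) ⊆
      closedBall (a (bobPlay a x₀ reply) n) (ρ * α * (α * β) ^ n) := by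
  rw [bobPlay_succ ha]
  exact hreply n _

namespace IsWinningStrategy

theorem antitone_closedBall_bobPlay (hwin : IsWinningStrategy α β ρ x₀ S a) (ha : IsCausal a)
    (hreply : IsLegalReply α β ρ reply) :
    Antitone fun n => closedBall (bobPlay a x₀ reply n) (ρ * (α * β) ^ n) :=
  antitone_nat_of_succ_le fun n => (hreply.closedBall_bobPlay_succ_subset ha n).trans
    ((hwin _ bobPlay_zero (hreply.closedBall_bobPlay_succ_subset ha)).1 n)

theorem mem_of_forall_mem_closedBall_bobPlay (hwin : IsWinningStrategy α β ρ x₀ S a)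
    (ha : IsCausal a) (hreply : IsLegalReply α β ρ reply) {z : X}
    (hz : ∀ n, z ∈ closedBall (bobPlay a x₀ reply n) (ρ * (α * β) ^ n)) : z ∈ S :=
  (hwin _ bobPlay_zero (hreply.closedBall_bobPlay_succ_subset ha)).2 z hz

theorem exists_mem_closedBall_bobPlay [CompleteSpace X] (hwin : IsWinningStrategy α β ρ x₀ S a)
    (ha : IsCausal a) (hreply : IsLegalReply α β ρ reply) (hρ : 0 ≤ ρ) (hαβ : 0 ≤ α * β)
    (hαβ₁ : α * β < 1) :
    ∃ z ∈ S, ∀ n, z ∈ closedBall (bobPlay a x₀ reply n) (ρ * (α * β) ^ n) := by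
  have hnested := hwin.antitone_closedBall_bobPlay ha hreply
  have hmem : ∀ {m n}, m ≤ n →
      bobPlay a x₀ reply n ∈ closedBall (bobPlay a x₀ reply m) (ρ * (α * β) ^ m) :=
    fun hmn => hnested hmn (mem_closedBall_self (by positivity))
  have hcauchy : CauchySeq (bobPlay a x₀ reply) :=
    cauchySeq_of_le_geometric _ ρ hαβ₁ fun n => by
      rw [dist_comm]
      exact hmem n.le_succ
  obtain ⟨z, hz⟩ := cauchySeq_tendsto_of_complete hcauchy
  have hz_mem : ∀ n, z ∈ closedBall (bobPlay a x₀ reply n) (ρ * (α * β) ^ n) := fun n =>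
    isClosed_closedBall.mem_of_tendsto hz (eventually_atTop.2 ⟨n, fun _ => hmem⟩)
  exact ⟨z, hwin.mem_of_forall_mem_closedBall_bobPlay ha hreply hz_mem, hz_mem⟩

end IsWinningStrategy

end Game

section Grid

variable {d K : ℕ}

noncomputable def gridPoint (K : ℕ) (R : ℝ) (c : Fin d → ℝ) (k : Fin d → Fin K) : Fin d → ℝ :=
  c + fun j => (((k j : ℕ) : ℝ) / K - 1 / 2) * R

theorem dist_gridPoint_le {R : ℝ} (hR : 0 ≤ R) (c : Fin d → ℝ) (k : Fin d → Fin K) :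
    dist (gridPoint K R c k) c ≤ R / 2 := by
  refine (dist_pi_le_iff (by positivity)).2 fun j => ?_
  have hK : (0 : ℝ) < K := by exact_mod_cast (k j).pos
  have hk : ((k j : ℕ) : ℝ) + 1 ≤ K := by exact_mod_cast (k j).isLt
  have hk' : ((k j : ℕ) : ℝ) / K ≤ 1 := (div_le_one hK).2 (by linarith)
  rw [gridPoint, Real.dist_eq, Pi.add_apply, add_sub_cancel_left, abs_mul, abs_of_nonneg hR]
  have : |((k j : ℕ) : ℝ) / K - 1 / 2| ≤ 1 / 2 :=
    abs_le.2 ⟨by linarith [div_nonneg (Nat.cast_nonneg (k j : ℕ)) hK.le], by linarith⟩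
  nlinarith

theorem le_dist_gridPoint {R : ℝ} (hR : 0 ≤ R) (c : Fin d → ℝ) {k k' : Fin d → Fin K}
    (hk : k ≠ k') : R / K ≤ dist (gridPoint K R c k) (gridPoint K R c k') := by
  obtain ⟨j, hj⟩ := Function.ne_iff.1 hk
  have hone : (1 : ℝ) ≤ |((k j : ℕ) : ℝ) - (k' j : ℕ)| := by
    rcases Nat.lt_or_gt_of_ne (Fin.val_ne_of_ne hj) with h | h
    · rw [abs_sub_comm]
      exact le_abs.2 (Or.inl (by rw [le_sub_iff_add_le']; exact_mod_cast h))
    · exact le_abs.2 (Or.inl (by rw [le_sub_iff_add_le']; exact_mod_cast h))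
  refine le_trans ?_ (dist_le_pi_dist _ _ j)
  have hdiff : gridPoint K R c k j - gridPoint K R c k' j
      = (((k j : ℕ) : ℝ) - (k' j : ℕ)) * (R / K) := by
    simp only [gridPoint, Pi.add_apply]
    ring
  rw [Real.dist_eq, hdiff, abs_mul, abs_of_nonneg (div_nonneg hR K.cast_nonneg)]
  exact le_mul_of_one_le_left (by positivity) hone

noncomputable def gridReply (α β ρ : ℝ) (ω : ℕ → Fin d → Fin K) (n : ℕ) (c : Fin d → ℝ) :
    Fin d → ℝ :=
  gridPoint K (ρ * α * (α * β) ^ n) c (ω n)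

variable {α β ρ : ℝ}

theorem isLegalReply_gridReply (hρ : 0 ≤ ρ) (hα : 0 ≤ α) (hβ : 0 ≤ β) (hK : 0 < K)
    (hβK : 3 * K * β ≤ 1) (ω : ℕ → Fin d → Fin K) : IsLegalReply α β ρ (gridReply α β ρ ω) := by
  intro n c
  have hR : 0 ≤ ρ * α * (α * β) ^ n := by positivity
  have hβ₂ : β ≤ 1 / 2 := by
    have : (1 : ℝ) ≤ K := by exact_mod_cast hK
    nlinarith
  refine closedBall_subset_closedBall' ?_
  have hrad : ρ * (α * β) ^ (n + 1) = β * (ρ * α * (α * β) ^ n) := by ring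
  have := dist_gridPoint_le hR c (ω n)
  rw [hrad, gridReply]
  nlinarith


variable {S : Set (Fin d → ℝ)} {a : (ℕ → Fin d → ℝ) → ℕ → Fin d → ℝ} {x₀ : Fin d → ℝ}

theorem IsWinningStrategy.le_dist_of_mem_closedBall_gridReply
    (hwin : IsWinningStrategy α β ρ x₀ S a) (ha : IsCausal a) (hρ : 0 ≤ ρ) (hα : 0 ≤ α)
    (hα₁ : α ≤ 1) (hβ : 0 ≤ β) (hK : 0 < K) (hβK : 3 * K * β ≤ 1)
    {ω ω' : ℕ → Fin d → Fin K} {n : ℕ} (hne : ∃ i < n, ω i ≠ ω' i) {x y : Fin d → ℝ}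
    (hx : x ∈ closedBall (bobPlay a x₀ (gridReply α β ρ ω) n) (ρ * (α * β) ^ n))
    (hy : y ∈ closedBall (bobPlay a x₀ (gridReply α β ρ ω') n) (ρ * (α * β) ^ n)) :
    ρ * (α * β) ^ n ≤ dist x y := by
  -- At move `m + 1` Bob picks different grid points around the same centre of Alice.
  obtain ⟨i, hin, hi⟩ := hne
  set m := PiNat.firstDiff ω ω'
  have hmi : m ≤ i := not_lt.1 fun h => hi (PiNat.apply_eq_of_lt_firstDiff h)
  have hagree : ∀ j < m, gridReply α β ρ ω j = gridReply α β ρ ω' j := fun j hj => by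
    funext c
    simp only [gridReply, PiNat.apply_eq_of_lt_firstDiff hj]
  have halice :
      a (bobPlay a x₀ (gridReply α β ρ ω)) m = a (bobPlay a x₀ (gridReply α β ρ ω')) m :=
    ha _ _ m fun j hj => bobPlay_congr ha fun l hl => hagree l (by omega)
  set R := ρ * α * (α * β) ^ m
  have hR : 0 ≤ R := by positivity
  have hcentres : R / K ≤ dist (bobPlay a x₀ (gridReply α β ρ ω) (m + 1))
      (bobPlay a x₀ (gridReply α β ρ ω') (m + 1)) := by
    rw [bobPlay_succ ha, bobPlay_succ ha, halice]
    exact le_dist_gridPoint hR _ (PiNat.apply_firstDiff_ne fun h => hi (congrFun h i))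
  have hspacing : 3 * (ρ * (α * β) ^ (m + 1)) ≤ R / K := by
    rw [le_div_iff₀ (by exact_mod_cast hK)]
    calc 3 * (ρ * (α * β) ^ (m + 1)) * K = (3 * K * β) * R := by ring
      _ ≤ 1 * R := by gcongr
      _ = R := one_mul R
  have hx' := hwin.antitone_closedBall_bobPlay ha (isLegalReply_gridReply hρ hα hβ hK hβK ω)
    (show m + 1 ≤ n by omega) hx
  have hy' := hwin.antitone_closedBall_bobPlay ha (isLegalReply_gridReply hρ hα hβ hK hβK ω')
    (show m + 1 ≤ n by omega) hy
  have hαβ₁ : α * β ≤ 1 := by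
    have : (1 : ℝ) ≤ K := by exact_mod_cast hK
    nlinarith
  have hrad : ρ * (α * β) ^ n ≤ ρ * (α * β) ^ (m + 1) :=
    mul_le_mul_of_nonneg_left (pow_le_pow_of_le_one (by positivity) hαβ₁ (by omega)) hρ
  rw [mem_closedBall'] at hx'
  rw [mem_closedBall] at hy'
  linarith [dist_triangle4 (bobPlay a x₀ (gridReply α β ρ ω) (m + 1)) x y
    (bobPlay a x₀ (gridReply α β ρ ω') (m + 1))]

end Grid

theorem IsAlphaBetaWinning.exists_separated {d K : ℕ} {α β : ℝ} {S : Set (Fin d → ℝ)}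
    (h : IsAlphaBetaWinning α β S) (hα : 0 < α) (hα₁ : α ≤ 1) (hβ : 0 < β) (hK : 0 < K)
    (hβK : 3 * K * β ≤ 1) :
    ∃ f : (ℕ → Fin d → Fin K) → Fin d → ℝ, range f ⊆ S ∧
      ∀ ω ω' n, (∃ i < n, ω i ≠ ω' i) → (α * β) ^ n ≤ dist (f ω) (f ω') := by
  obtain ⟨a, ha, hwin⟩ : ∃ a, IsCausal a ∧ IsWinningStrategy α β 1 (0 : Fin d → ℝ) S a :=
    h 1 one_pos 0
  have hreply := isLegalReply_gridReply (d := d) (α := α) zero_le_one hα.le hβ.le hK hβK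
  have hαβ₁ : α * β < 1 := by
    have : (1 : ℝ) ≤ K := by exact_mod_cast hK
    nlinarith
  choose f hfS hf using fun ω =>
    hwin.exists_mem_closedBall_bobPlay ha (hreply ω) zero_le_one (by positivity) hαβ₁
  refine ⟨f, range_subset_iff.2 hfS, fun ω ω' n hne => ?_⟩
  simpa using hwin.le_dist_of_mem_closedBall_gridReply ha zero_le_one hα.le hα₁ hβ.le hK hβK
    hne (hf ω n) (hf ω' n)


noncomputable def ofDigitsPi {d K : ℕ} (ω : ℕ → Fin d → Fin K) : Fin d → ℝ :=
  fun j => Real.ofDigits fun i => ω i j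

theorem dist_ofDigitsPi_le {d K n : ℕ} {ω ω' : ℕ → Fin d → Fin K} (h : ∀ i < n, ω i = ω' i) :
    dist (ofDigitsPi ω) (ofDigitsPi ω') ≤ ((K : ℝ) ^ n)⁻¹ :=
  (dist_pi_le_iff (by positivity)).2 fun j =>
    Real.abs_ofDigits_sub_ofDigits_le fun i hi => congrFun (h i hi) j

theorem ball_subset_range_ofDigitsPi {d K : ℕ} (hK : 1 < K) :
    ball (fun _ => 1 / 2) (1 / 2) ⊆ range (ofDigitsPi (d := d) (K := K)) := by
  intro x hx
  have hcoord : ∀ j, ∃ δ : ℕ → Fin K, Real.ofDigits δ = x j := fun j => by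
    have hj := (dist_pi_lt_iff (by norm_num)).1 (mem_ball.1 hx) j
    rw [Real.dist_eq, abs_lt] at hj
    obtain ⟨δ, -, hδ⟩ := Real.ofDigits_SurjOn hK (mem_Icc.2 ⟨by linarith, by linarith⟩)
    exact ⟨δ, hδ⟩
  choose δ hδ using hcoord
  exact ⟨fun i j => δ j i, funext hδ⟩

theorem dist_ofDigitsPi_le_of_separated {X : Type*} [MetricSpace X] {d K : ℕ}
    {f : (ℕ → Fin d → Fin K) → X} {q : ℝ} {r : ℝ≥0} (hK : 0 < K) (hq : 0 < q)
    (hKq : (K : ℝ)⁻¹ ≤ q ^ (r : ℝ))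
    (hsep : ∀ ω ω' n, (∃ i < n, ω i ≠ ω' i) → q ^ n ≤ dist (f ω) (f ω'))
    (ω ω' : ℕ → Fin d → Fin K) :
    dist (ofDigitsPi ω) (ofDigitsPi ω') ≤ K * dist (f ω) (f ω') ^ (r : ℝ) := by
  rcases eq_or_ne ω ω' with rfl | hne
  · rw [dist_self, dist_self]
    positivity
  set m := PiNat.firstDiff ω ω'
  have hsep_m := hsep ω ω' (m + 1) ⟨m, m.lt_succ_self, PiNat.apply_firstDiff_ne hne⟩
  calc dist (ofDigitsPi ω) (ofDigitsPi ω') ≤ ((K : ℝ) ^ m)⁻¹ :=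
        dist_ofDigitsPi_le fun i hi => PiNat.apply_eq_of_lt_firstDiff hi
    _ = K * (K : ℝ)⁻¹ ^ (m + 1) := by
        rw [inv_pow, pow_succ, mul_inv, mul_left_comm, mul_inv_cancel₀ (by positivity), mul_one]
    _ ≤ K * (q ^ (r : ℝ)) ^ (m + 1) := by gcongr
    _ = K * (q ^ (m + 1)) ^ (r : ℝ) := by rw [Real.rpow_pow_comm hq.le]
    _ ≤ K * dist (f ω) (f ω') ^ (r : ℝ) := by gcongr

theorem le_dimH_range_of_separated {X : Type*} [MetricSpace X] {d K : ℕ} (hK : 1 < K)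
    {f : (ℕ → Fin d → Fin K) → X} {q : ℝ} {r : ℝ≥0} (hq : 0 < q) (hr : 0 < r)
    (hKq : (K : ℝ)⁻¹ ≤ q ^ (r : ℝ))
    (hsep : ∀ ω ω' n, (∃ i < n, ω i ≠ ω' i) → q ^ n ≤ dist (f ω) (f ω')) :
    (d : ℝ≥0∞) * r ≤ dimH (range f) := by
  have hinj : Injective f := fun ω ω' h => by
    by_contra hne
    obtain ⟨i, hi⟩ := Function.ne_iff.1 hne
    have := hsep ω ω' (i + 1) ⟨i, i.lt_succ_self, hi⟩
    rw [h, dist_self] at this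
    exact (pow_pos hq _).not_ge this
  -- `g` reads a point of `range f` back as the base-`K` digits of its code.
  set g := extend f ofDigitsPi 0
  have hg : ∀ ω, g (f ω) = ofDigitsPi ω := hinj.extend_apply _ _
  have hholder : HolderOnWith K r g (range f) := by
    rintro _ ⟨ω, rfl⟩ _ ⟨ω', rfl⟩
    rw [hg, hg, edist_nndist, edist_nndist, ← ENNReal.coe_rpow_of_nonneg _ r.coe_nonneg,
      ← ENNReal.coe_mul, ENNReal.coe_le_coe, ← NNReal.coe_le_coe]
    simpa using dist_ofDigitsPi_le_of_separated (by omega) hq hKq hsep ω ω'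
  have himage : range (ofDigitsPi (d := d) (K := K)) ⊆ g '' range f := by
    rintro _ ⟨ω, rfl⟩
    exact ⟨f ω, mem_range_self ω, hg ω⟩
  calc (d : ℝ≥0∞) * r = dimH (ball (fun _ : Fin d => (1 / 2 : ℝ)) (1 / 2)) * r := by
        rw [Real.dimH_ball_pi_fin _ (by norm_num)]
    _ ≤ dimH (g '' range f) * r := by
        gcongr; exact (ball_subset_range_ofDigitsPi hK).trans himage
    _ ≤ dimH (range f) := ENNReal.mul_le_of_le_div (hholder.dimH_image_le hr)

theorem IsAlphaBetaWinning.mul_le_dimH {d K : ℕ} {α β : ℝ} {S : Set (Fin d → ℝ)}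
    (h : IsAlphaBetaWinning α β S) (hα : 0 < α) (hα₁ : α ≤ 1) (hβ : 0 < β) (hK : 1 < K)
    (hβK : 3 * K * β ≤ 1) {r : ℝ≥0} (hr : 0 < r) (hKr : (K : ℝ)⁻¹ ≤ (α * β) ^ (r : ℝ)) :
    (d : ℝ≥0∞) * r ≤ dimH S := by
  obtain ⟨f, hfS, hsep⟩ := h.exists_separated hα hα₁ hβ (by omega) hβK
  exact (le_dimH_range_of_separated hK (mul_pos hα hβ) hr hKr hsep).trans (dimH_mono hfS)

theorem IsAlphaWinning.mul_le_dimH {d : ℕ} {α : ℝ} {S : Set (Fin d → ℝ)}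
    (h : IsAlphaWinning α S) {r : ℝ≥0} (hr₁ : r < 1) : (d : ℝ≥0∞) * r ≤ dimH S := by
  obtain ⟨hα, hα₁, hwin⟩ := h
  rcases eq_zero_or_pos r with rfl | hr
  · simp
  obtain ⟨K, hK, hKr⟩ : ∃ K : ℕ, 1 < K ∧ ((α / 3) ^ (r : ℝ))⁻¹ ≤ (K : ℝ) ^ (1 - (r : ℝ)) :=
    ((eventually_gt_atTop 1).and (((tendsto_rpow_atTop (sub_pos.2 hr₁)).comp
      tendsto_natCast_atTop_atTop).eventually_ge_atTop _)).exists
  -- With `β = 1 / (3K)`, the Hölder condition `K⁻¹ ≤ (αβ)^r` reads `(3/α)^r ≤ K^(1-r)`.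
  have hK₀ : (0 : ℝ) < K := by positivity
  have hK₁ : (1 : ℝ) < K := by exact_mod_cast hK
  set β := ((3 : ℝ) * K)⁻¹
  refine (hwin β (by positivity) ?_).mul_le_dimH hα hα₁.le (by positivity) hK ?_ hr ?_
  · exact inv_lt_one_of_one_lt₀ (by linarith)
  · exact (mul_inv_cancel₀ (by positivity : (3 : ℝ) * K ≠ 0)).le
  · calc (K : ℝ)⁻¹ = ((K : ℝ) ^ (r : ℝ))⁻¹ * ((K : ℝ) ^ (1 - (r : ℝ)))⁻¹ := by
          rw [← mul_inv, ← Real.rpow_add hK₀, add_sub_cancel, Real.rpow_one]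
      _ ≤ ((K : ℝ) ^ (r : ℝ))⁻¹ * (α / 3) ^ (r : ℝ) := by
          gcongr
          exact inv_le_of_inv_le₀ (by positivity) hKr
      _ = (α * β) ^ (r : ℝ) := by
          rw [show α * β = α / 3 * (K : ℝ)⁻¹ by simp only [β]; ring,
            Real.mul_rpow (by positivity) (by positivity), Real.inv_rpow hK₀.le, mul_comm]

/-- Any winning set for Schmidt's game in `ℝ^d` has Hausdorff dimension `d`. -/
theorem dimH_eq_of_winning
    (d : ℕ) (S : Set (Fin d → ℝ)) (h : ∃ α : ℝ, IsAlphaWinning α S) :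
    dimH S = d := by
  obtain ⟨α, hα⟩ := h
  refine le_antisymm ((dimH_mono (subset_univ S)).trans_eq (Real.dimH_univ_pi_fin d)) ?_
  refine ENNReal.le_of_forall_lt_one_mul_le fun t ht => ?_
  lift t to ℝ≥0 using ne_top_of_lt ht
  rw [mul_comm]
  exact hα.mul_le_dimH (by exact_mod_cast ht)
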